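/- For every integer n ≥ 2 and every δ with 0 < δ < π/2, one has n + (sin δ)^{n−2} cos δ / ∫₀^δ (sin t)^{n−1} dt > n / sin² δ. -/

import Mathlib

open Real Set

/-- The second inequality of Lemma 3.3(ii):
`n + (sin δ)^(n-2) cos δ / ∫₀^δ (sin t)^(n-1) dt > n / sin² δ`. -/
theorem eigenvalue_bound_chain (n : ℕ) (hn : 2 ≤ n) (δ : ℝ) (hδ₀ : 0 < δ) (hδ : δ < π / 2) :
    (n : ℝ) + Real.sin δ ^ (n - 2) * Real.cos δ / ∫ t in (0 : ℝ)..δ, Real.sin t ^ (n - 1)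
      > n / Real.sin δ ^ 2 := by
  have hπ : (0:ℝ) < π := Real.pi_pos
  have hδπ : δ < π := hδ.trans_le (by linarith)
  have hs : 0 < Real.sin δ := Real.sin_pos_of_pos_of_lt_pi hδ₀ hδπ
  have hc : 0 < Real.cos δ := Real.cos_pos_of_mem_Ioo ⟨by linarith, hδ⟩
  have hn0 : (0:ℝ) < n := by exact_mod_cast lt_of_lt_of_le (by norm_num) hn
  set I := ∫ t in (0:ℝ)..δ, Real.sin t ^ (n-1) with hIdef
  have hcont : Continuous (fun t => Real.sin t ^ (n-1)) := Real.continuous_sin.pow _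
  have hint : IntervalIntegrable (fun t => Real.sin t ^ (n-1)) MeasureTheory.volume 0 δ :=
    hcont.intervalIntegrable _ _
  have hIpos : 0 < I := by
    apply intervalIntegral.intervalIntegral_pos_of_pos_on hint ?_ hδ₀
    intro x hx
    exact pow_pos (Real.sin_pos_of_pos_of_lt_pi hx.1 (hx.2.trans hδπ)) _
  -- J = ∫ sin^{n-1} t * cos t = sin δ ^ n / n
  have hder : ∀ t ∈ uIcc (0:ℝ) δ,
      HasDerivAt (fun t => Real.sin t ^ n / n) (Real.sin t ^ (n-1) * Real.cos t) t := by
    intro t _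
    have h1 : HasDerivAt (fun t => Real.sin t ^ n) ((n:ℝ) * Real.sin t ^ (n-1) * Real.cos t) t := by
      simpa [mul_comm, mul_assoc] using (Real.hasDerivAt_sin t).fun_pow n
    have := h1.div_const (n:ℝ)
    exact this.congr_deriv (by rw [mul_assoc, mul_div_cancel_left₀ _ hn0.ne'])
  have hcont2 : Continuous (fun t => Real.sin t ^ (n-1) * Real.cos t) :=
    (Real.continuous_sin.pow _).mul Real.continuous_cos
  have hint2 : IntervalIntegrable (fun t => Real.sin t ^ (n-1) * Real.cos t)
      MeasureTheory.volume 0 δ := hcont2.intervalIntegrable _ _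
  have hJ : (∫ t in (0:ℝ)..δ, Real.sin t ^ (n-1) * Real.cos t) = Real.sin δ ^ n / n := by
    rw [intervalIntegral.integral_eq_sub_of_hasDerivAt hder hint2]
    simp
    exact Or.inl (by omega)
  -- strict bound: cos δ * I < sin δ ^ n / n
  have hkey : Real.cos δ * I < Real.sin δ ^ n / n := by
    have hpos : 0 < ∫ t in (0:ℝ)..δ, (Real.sin t ^ (n-1) * Real.cos t
        - Real.cos δ * Real.sin t ^ (n-1)) := by
      apply intervalIntegral.intervalIntegral_pos_of_pos_on
        ((hcont2.sub (continuous_const.mul hcont)).intervalIntegrable _ _) ?_ hδ₀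
      intro x hx
      have hsx : 0 < Real.sin x := Real.sin_pos_of_pos_of_lt_pi hx.1 (hx.2.trans hδπ)
      have hcx : Real.cos δ < Real.cos x := by
        apply Real.cos_lt_cos_of_nonneg_of_le_pi hx.1.le hδπ.le hx.2
      have : 0 < Real.sin x ^ (n-1) * (Real.cos x - Real.cos δ) :=
        mul_pos (pow_pos hsx _) (by linarith)
      show 0 < Real.sin x ^ (n-1) * Real.cos x - Real.cos δ * Real.sin x ^ (n-1)
      nlinarith
    rw [intervalIntegral.integral_sub hint2 (hint.const_mul _),
      intervalIntegral.integral_const_mul, hJ] at hpos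
    linarith
  -- sin δ ^ (n-2) * sin δ ^ 2 = sin δ ^ n
  have hpow : Real.sin δ ^ (n-2) * Real.sin δ ^ 2 = Real.sin δ ^ n := by
    rw [← pow_add]
    congr 1
    omega
  have hstep : (n:ℝ) * Real.cos δ ^ 2 / Real.sin δ ^ 2
      < Real.sin δ ^ (n-2) * Real.cos δ / I := by
    rw [div_lt_div_iff₀ (by positivity) hIpos]
    calc (n:ℝ) * Real.cos δ ^ 2 * I = (n * Real.cos δ) * (Real.cos δ * I) := by ring
      _ < (n * Real.cos δ) * (Real.sin δ ^ n / n) :=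
          mul_lt_mul_of_pos_left hkey (mul_pos hn0 hc)
      _ = Real.sin δ ^ n * Real.cos δ := by field_simp
      _ = Real.sin δ ^ (n-2) * Real.cos δ * Real.sin δ ^ 2 := by rw [← hpow]; ring
  have hId : (n:ℝ) / Real.sin δ ^ 2 = n + n * Real.cos δ ^ 2 / Real.sin δ ^ 2 := by
    have := Real.sin_sq_add_cos_sq δ
    field_simp
    nlinarith
  rw [gt_iff_lt, hId]
  linarith
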